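/- Let T be a 4-connected triangulation of a finite point set P in the plane in general position. Then no two inward triangles of T have the same inward vertex; that is, every point of P in the interior of CH(P) is the inward vertex of at most one inward triangle of T. -/

import Mathlib

open scoped Classical

noncomputable section

/-- Points of the plane. -/
abbrev Pt : Type := ℝ × ℝ

/-- Orientation determinant of two plane vectors. -/
def det2 (u v : Pt) : ℝ := u.1 * v.2 - u.2 * v.1

/-- `P` is in general position: no three distinct points of `P` are collinear. -/
def GenPos (P : Finset Pt) : Prop :=
  ∀ p ∈ P, ∀ q ∈ P, ∀ r ∈ P, p ≠ q → p ≠ r → q ≠ r → ¬Collinear ℝ ({p, q, r} : Set Pt)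

/-- The vertices of the convex hull of `P` (the extreme points of `P`). -/
def hullVx (P : Finset Pt) : Finset Pt :=
  P.filter fun p => p ∉ convexHull ℝ ((P.erase p : Finset Pt) : Set Pt)

/-- The points of `P` lying in the interior of the convex hull of `P`. -/
def intPts (P : Finset Pt) : Finset Pt :=
  P.filter fun p => p ∈ interior (convexHull ℝ (P : Set Pt))

/-- `p` and `q` are consecutive vertices of the convex hull of `P`
(the segment joining them is an edge of the hull boundary). -/
def HullEdge (P : Finset Pt) (p q : Pt) : Prop :=
  p ∈ hullVx P ∧ q ∈ hullVx P ∧ p ≠ q ∧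
    segment ℝ p q ⊆ frontier (convexHull ℝ (P : Set Pt))

/-- A plane graph with vertex set `P`, all of whose edges are straight line
segments: edges may only meet at common endpoints. -/
structure PlaneGraph (P : Finset Pt) where
  Adj : Pt → Pt → Prop
  symm : ∀ {p q}, Adj p q → Adj q p
  mem_left : ∀ {p q}, Adj p q → p ∈ P
  ne : ∀ {p q}, Adj p q → p ≠ q
  noncross : ∀ {p q r s}, Adj p q → Adj r s →
    (openSegment ℝ p q ∩ openSegment ℝ r s).Nonempty → ({p, q} : Set Pt) = {r, s}

/-- A triangulation of `P`: a plane straight-line graph on `P` that is maximal,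
i.e. no further segment between points of `P` can be added without crossing an
existing edge.  (For a finite point set in general position this is equivalent
to: the outer face is the complement of the convex hull and every bounded face
is a triangle.) -/
structure Triangulation (P : Finset Pt) extends PlaneGraph P where
  maximal : ∀ p ∈ P, ∀ q ∈ P, p ≠ q → ¬Adj p q →
    ∃ r s, Adj r s ∧ ({p, q} : Set Pt) ≠ {r, s} ∧
      (openSegment ℝ p q ∩ openSegment ℝ r s).Nonempty

/-- The abstract graph underlying a plane graph. -/
def PlaneGraph.graph {P : Finset Pt} (G : PlaneGraph P) : SimpleGraph {x // x ∈ P} where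
  Adj p q := G.Adj p q
  symm := ⟨fun _ _ h => G.symm h⟩
  loopless := ⟨fun _ h => G.ne h rfl⟩

/-- A graph is `k`-connected if it has at least `k+1` vertices and no set of at
most `k-1` vertices disconnects it (removing fewer than `k` vertices leaves a
connected graph). -/
def KConnected {V : Type*} [Fintype V] (G : SimpleGraph V) (k : ℕ) : Prop :=
  k + 1 ≤ Fintype.card V ∧
    ∀ S : Finset V, S.card < k → (G.induce ((↑S : Set V)ᶜ)).Connected

/-- A chord of a plane graph on `P`: an edge joining two nonconsecutive
vertices of the convex hull of `P`. -/
def IsChord {P : Finset Pt} (G : PlaneGraph P) (p q : Pt) : Prop :=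
  G.Adj p q ∧ p ∈ hullVx P ∧ q ∈ hullVx P ∧ ¬HullEdge P p q

/-- Three points forming a triangle of the graph `G` (pairwise adjacent). -/
def IsTriangleOf {P : Finset Pt} (G : PlaneGraph P) (p q r : Pt) : Prop :=
  G.Adj p q ∧ G.Adj q r ∧ G.Adj p r

/-- A complex triangle of `G`: a triangle formed by three edges of `G` that
contains a point of `P` in its interior and another point of `P` in its
exterior. -/
def IsComplexTri {P : Finset Pt} (G : PlaneGraph P) (p q r : Pt) : Prop :=
  IsTriangleOf G p q r ∧
    (∃ x ∈ P, x ∈ interior (convexHull ℝ ({p, q, r} : Set Pt))) ∧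
    (∃ y ∈ P, y ∉ convexHull ℝ ({p, q, r} : Set Pt))

/-- A triangulation is noncomplex if it has neither chords nor complex
triangles. -/
def Noncomplex {P : Finset Pt} (T : Triangulation P) : Prop :=
  (∀ p q, ¬IsChord T.toPlaneGraph p q) ∧ ∀ p q r, ¬IsComplexTri T.toPlaneGraph p q r

/-- `Q` is anomalous: its convex hull is a triangle and there is a hull vertex
`p` such that every point of `Q \ {p}` lies on the boundary of the convex hull
of `Q \ {p}`. -/
def Anomalous (Q : Finset Pt) : Prop :=
  (hullVx Q).card = 3 ∧
    ∃ p ∈ hullVx Q, ∀ q ∈ Q.erase p,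
      q ∉ interior (convexHull ℝ ((Q.erase p : Finset Pt) : Set Pt))

/-- `s` is a vertex of the convex hull of `P` lying strictly between `pr` and
`pt` in counterclockwise order (i.e. on the open counterclockwise hull arc
from `pr` to `pt`; for a hull traversed counterclockwise these are exactly the
hull vertices strictly on the right of the directed chord `pr → pt`). -/
def CCWBetween (P : Finset Pt) (pr pt s : Pt) : Prop :=
  s ∈ hullVx P ∧ det2 (pt - pr) (s - pr) < 0

/-- The set `S` of hull vertices strictly between `pr` and `pt`
counterclockwise. -/
def cutSet (P : Finset Pt) (pr pt : Pt) : Finset Pt :=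
  P.filter fun s => CCWBetween P pr pt s

/-- An inward triangle of a plane graph `G` on `P`: a triangle of `G` two of
whose vertices `b`, `c` are consecutive hull vertices and whose third vertex
`a` (its inward vertex) is an interior point of the hull. -/
def InwardTri {P : Finset Pt} (G : PlaneGraph P) (b c a : Pt) : Prop :=
  IsTriangleOf G b c a ∧ HullEdge P b c ∧ a ∈ intPts P

/-- A (geometric) inward triangle of the point set `P`: its base `b c` is an
edge of the hull and its inward vertex `a` is an interior point. -/
def GInwardTri (P : Finset Pt) (b c a : Pt) : Prop :=
  HullEdge P b c ∧ a ∈ intPts P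

/-- The triangle `b c a` contains no point of `P` in its interior. -/
def EmptyTri (P : Finset Pt) (b c a : Pt) : Prop :=
  ∀ x ∈ P, x ∉ interior (convexHull ℝ ({b, c, a} : Set Pt))

/-- The inward triangle `b c a` is forbidden: for some hull vertices `pr ≠ pt`,
its base edge lies on the clockwise hull chain from `pr` to `pt` (i.e. `b`, `c`
are not strictly counterclockwise between `pr` and `pt`) while its inward
vertex lies on the boundary of the convex hull of `Q = P \ S`. -/
def ForbiddenTri (P : Finset Pt) (b c a : Pt) : Prop :=
  ∃ pr ∈ hullVx P, ∃ pt ∈ hullVx P, pr ≠ pt ∧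
    b ∉ cutSet P pr pt ∧ c ∉ cutSet P pr pt ∧
    a ∉ interior (convexHull ℝ ((P \ cutSet P pr pt : Finset Pt) : Set Pt))

/-- A triangle, recorded as `(b, c, a)` with base `b c` and inward vertex `a`. -/
abbrev Tri : Type := Pt × Pt × Pt

def triVerts (t : Tri) : Set Pt := {t.1, t.2.1, t.2.2}

def triInterior (t : Tri) : Set Pt := interior (convexHull ℝ (triVerts t))

/-- A non-forbidden empty inward triangle of `P`. -/
def GoodTri (P : Finset Pt) (t : Tri) : Prop :=
  GInwardTri P t.1 t.2.1 t.2.2 ∧ EmptyTri P t.1 t.2.1 t.2.2 ∧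
    ¬ForbiddenTri P t.1 t.2.1 t.2.2

/-- Two triangles share an edge (i.e. share two distinct vertices). -/
def ShareEdge (t₁ t₂ : Tri) : Prop :=
  ∃ u v : Pt, u ≠ v ∧ u ∈ triVerts t₁ ∧ v ∈ triVerts t₁ ∧
    u ∈ triVerts t₂ ∧ v ∈ triVerts t₂

/-- A compatible set of triangles: all its members are non-forbidden empty
inward triangles, and no two (distinct) members share an edge, an inward
vertex, or an interior point. -/
def Compatible (P : Finset Pt) (Tc : Finset Tri) : Prop :=
  (∀ t ∈ Tc, GoodTri P t) ∧
    ∀ t₁ ∈ Tc, ∀ t₂ ∈ Tc, triVerts t₁ ≠ triVerts t₂ →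
      ¬ShareEdge t₁ t₂ ∧ t₁.2.2 ≠ t₂.2.2 ∧ triInterior t₁ ∩ triInterior t₂ = ∅

/-- A maximal compatible set: no inward triangle can be added while keeping it
compatible. -/
def MaxCompatible (P : Finset Pt) (Tc : Finset Tri) : Prop :=
  Compatible P Tc ∧
    ∀ t : Tri, Compatible P (insert t Tc) → ∃ t' ∈ Tc, triVerts t' = triVerts t

/-- The number of triangles of `Tc` whose inward vertex is a vertex of the
convex hull of `P'` (counted up to the underlying vertex set). -/
def tcPrimeCard (P : Finset Pt) (Tc : Finset Tri) : ℕ :=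
  ((Tc.filter fun t => t.2.2 ∈ hullVx (intPts P)).image triVerts).card

/-- `max|T_c'|`: the maximum, over all maximal compatible sets `T_c`, of the
number of triangles of `T_c` whose inward vertex is a hull vertex of `P'`. -/
noncomputable def maxTcPrime (P : Finset Pt) : ℕ :=
  sSup {m | ∃ Tc : Finset Tri, MaxCompatible P Tc ∧ m = tcPrimeCard P Tc}

/-! If `a` were the inward vertex of two different inward triangles, it would be adjacent to three
distinct hull vertices. Together with any fifth point, the rays from `a` to these vertices always
include two, towards hull vertices `p` and `q`, bounding a convex cone that strictly separates two
of the remaining points. Removing only `a`, `p`, `q` then disconnects the graph: an edge leaving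
the cone would meet one of the two rays, so it would pass through `a`, cross the edge `ap` or `aq`,
or pass through or beyond `p` or `q`, which would then not be a vertex of the convex hull. -/

-- Twice the signed area of the triangle `a p q`, positive iff it is oriented counterclockwise.
def orient (a p q : Pt) : ℝ := det2 (p - a) (q - a)

section Orientation

variable {a p q : Pt}

@[simp] lemma orient_apex_left (a q : Pt) : orient a a q = 0 := by simp [orient, det2]

@[simp] lemma orient_apex_right (a p : Pt) : orient a p a = 0 := by simp [orient, det2]

@[simp] lemma orient_self (a p : Pt) : orient a p p = 0 := by simp only [orient, det2]; ring

lemma orient_swap (a p q : Pt) : orient a q p = -orient a p q := by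
  simp only [orient, det2]; ring

lemma orient_lineMap_left (a p q : Pt) (s : ℝ) :
    orient a (AffineMap.lineMap a p s) q = s * orient a p q := by
  simp only [orient, det2, AffineMap.lineMap_apply_module, Prod.fst_add, Prod.snd_add,
    Prod.fst_sub, Prod.snd_sub, Prod.smul_fst, Prod.smul_snd, smul_eq_mul]
  ring

lemma orient_lineMap_right (a p q : Pt) (s : ℝ) :
    orient a p (AffineMap.lineMap a q s) = s * orient a p q := by
  rw [orient_swap, orient_lineMap_left, orient_swap]; ring

lemma orient_plucker (a u₁ u₂ u₃ w : Pt) :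
    orient a u₁ u₂ * orient a u₃ w - orient a u₁ u₃ * orient a u₂ w +
      orient a u₁ w * orient a u₂ u₃ = 0 := by
  simp only [orient, det2, Prod.fst_sub, Prod.snd_sub]; ring

lemma Continuous.orient {α : Type*} [TopologicalSpace α] (a : Pt) {f g : α → Pt}
    (hf : Continuous f) (hg : Continuous g) : Continuous fun t => orient a (f t) (g t) := by
  simp only [_root_.orient, det2, Prod.fst_sub, Prod.snd_sub]
  fun_prop

-- The witness is the coordinate of the projection of `z - a` onto `p - a`.
lemma exists_lineMap_eq_of_orient_eq_zero {z : Pt} (hp : p ≠ a) (h : orient a p z = 0) :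
    ∃ s : ℝ, AffineMap.lineMap a p s = z := by
  have hd : (p.1 - a.1) ^ 2 + (p.2 - a.2) ^ 2 ≠ 0 := by
    intro h0
    apply hp
    ext <;> nlinarith [sq_nonneg (p.1 - a.1), sq_nonneg (p.2 - a.2)]
  refine ⟨((z.1 - a.1) * (p.1 - a.1) + (z.2 - a.2) * (p.2 - a.2)) /
    ((p.1 - a.1) ^ 2 + (p.2 - a.2) ^ 2), ?_⟩
  simp only [orient, det2, Prod.fst_sub, Prod.snd_sub] at h
  ext <;> simp only [AffineMap.lineMap_apply_module, Prod.fst_add, Prod.snd_add,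
    Prod.smul_fst, Prod.smul_snd, smul_eq_mul] <;> field_simp
  · linear_combination (p.2 - a.2) * h
  · linear_combination (-(p.1 - a.1)) * h

lemma collinear_of_orient_eq_zero (h : orient a p q = 0) : Collinear ℝ ({a, p, q} : Set Pt) := by
  rcases eq_or_ne p a with rfl | hp
  · simpa using collinear_pair ℝ p q
  obtain ⟨s, rfl⟩ := exists_lineMap_eq_of_orient_eq_zero hp h
  have := collinear_insert_of_mem_affineSpan_pair (AffineMap.lineMap_mem_affineSpan_pair s a p)
  rwa [Set.insert_comm, Set.pair_comm (AffineMap.lineMap a p s)] at this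

end Orientation

section GeneralPosition

variable {P : Finset Pt} {a p q : Pt}

lemma GenPos.orient_ne_zero (hgp : GenPos P) (ha : a ∈ P) (hp : p ∈ P) (hq : q ∈ P)
    (hap : a ≠ p) (haq : a ≠ q) (hpq : p ≠ q) : orient a p q ≠ 0 :=
  fun h => hgp a ha p hp q hq hap haq hpq (collinear_of_orient_eq_zero h)

lemma GenPos.notMem_openSegment (hgp : GenPos P) (ha : a ∈ P) (hp : p ∈ P) (hq : q ∈ P)
    (hap : a ≠ p) (haq : a ≠ q) (hpq : p ≠ q) : a ∉ openSegment ℝ p q := fun h => by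
  have := (mem_segment_iff_wbtw.1 (openSegment_subset_segment ℝ p q h)).collinear
  exact hgp a ha p hp q hq hap haq hpq (by rwa [Set.insert_comm] at this)

end GeneralPosition

-- For `0 < orient a p q`, the open convex cone with apex `a` spanned by the rays `ap` and `aq`,
-- and the complement of its closure.
def InCone (a p q x : Pt) : Prop := 0 < orient a p x ∧ 0 < orient a x q

def OutCone (a p q y : Pt) : Prop := orient a p y < 0 ∨ orient a y q < 0

section Cones

variable {a p q x y : Pt}

lemma InCone.ne (h : InCone a p q x) : x ≠ a ∧ x ≠ p ∧ x ≠ q := by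
  refine ⟨?_, ?_, ?_⟩ <;> rintro rfl <;> simp [InCone] at h

lemma OutCone.ne (hpq : 0 < orient a p q) (h : OutCone a p q y) : y ≠ a ∧ y ≠ p ∧ y ≠ q := by
  refine ⟨?_, ?_, ?_⟩ <;> rintro rfl <;> simp [OutCone] at h <;> linarith

lemma outCone_of_not_inCone (hp : orient a p y ≠ 0) (hq : orient a y q ≠ 0)
    (h : ¬InCone a p q y) : OutCone a p q y := by
  rcases hp.lt_or_gt with hp | hp
  exacts [Or.inl hp, Or.inr ((not_lt.1 fun hq' => h ⟨hp, hq'⟩).lt_of_ne hq)]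

def HasSeparatingCone (a : Pt) (U : Set Pt) (w : Pt) : Prop :=
  ∃ p ∈ U, ∃ q ∈ U, 0 < orient a p q ∧
    ∃ x ∈ insert w U, ∃ y ∈ insert w U, InCone a p q x ∧ OutCone a p q y

lemma hasSeparatingCone_of_inCone {U : Set Pt} {r w : Pt} (hp : p ∈ U) (hq : q ∈ U) (hr : r ∈ U)
    (hpq : 0 < orient a p q) (hpr : 0 < orient a p r) (hrq : 0 < orient a r q)
    (hpw : orient a p w ≠ 0) (hqw : orient a q w ≠ 0) (hrw : orient a r w ≠ 0) :
    HasSeparatingCone a U w := by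
  have := orient_swap a p r
  have := orient_swap a r q
  by_cases hw : InCone a p q w
  · rcases hrw.lt_or_gt with hrw | hrw
    · refine ⟨p, hp, r, hr, hpr, w, by simp, q, by simp [hq], ⟨hw.1, ?_⟩, Or.inr ?_⟩ <;>
        linarith [orient_swap a r w]
    · exact ⟨r, hr, q, hq, hrq, w, by simp, p, by simp [hp], ⟨hrw, hw.2⟩, Or.inl (by linarith)⟩
  · refine ⟨p, hp, q, hq, hpq, r, by simp [hr], w, by simp, ⟨hpr, hrq⟩, ?_⟩
    exact outCone_of_not_inCone hpw (by rwa [orient_swap, neg_ne_zero]) hw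

lemma hasSeparatingCone_of_surrounding {U : Set Pt} {u₁ u₂ u₃ w : Pt}
    (hu₁ : u₁ ∈ U) (hu₂ : u₂ ∈ U) (hu₃ : u₃ ∈ U)
    (h₁₂ : 0 < orient a u₁ u₂) (h₂₃ : 0 < orient a u₂ u₃) (h₃₁ : 0 < orient a u₃ u₁)
    (h₁w : orient a u₁ w ≠ 0) (h₂w : orient a u₂ w ≠ 0) (h₃w : orient a u₃ w ≠ 0) :
    HasSeparatingCone a U w := by
  have of_inCone {p q r : Pt} (hp : p ∈ U) (hq : q ∈ U) (hr : r ∈ U) (hpq : 0 < orient a p q)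
      (hqr : 0 < orient a q r) (hw : InCone a p q w) : HasSeparatingCone a U w :=
    ⟨p, hp, q, hq, hpq, w, by simp, r, Set.mem_insert_of_mem _ hr, hw,
      Or.inr (by linarith [orient_swap a q r])⟩
  have := orient_swap a u₁ w
  have := orient_swap a u₂ w
  have := orient_swap a u₃ w
  -- `w` lies in one of the three cones, since by the Plücker relation the three orientations
  -- `orient a uᵢ w` cannot all have the same sign.
  have := orient_plucker a u₁ u₂ u₃ w
  have := orient_swap a u₁ u₃
  rcases h₁w.lt_or_gt with h₁ | h₁ <;> rcases h₂w.lt_or_gt with h₂ | h₂ <;>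
    rcases h₃w.lt_or_gt with h₃ | h₃
  · nlinarith [mul_pos h₁₂ (neg_pos.2 h₃), mul_pos h₃₁ (neg_pos.2 h₂),
      mul_pos (neg_pos.2 h₁) h₂₃]
  · exact of_inCone hu₃ hu₁ hu₂ h₃₁ h₁₂ ⟨h₃, by linarith⟩
  · exact of_inCone hu₂ hu₃ hu₁ h₂₃ h₃₁ ⟨h₂, by linarith⟩
  · exact of_inCone hu₃ hu₁ hu₂ h₃₁ h₁₂ ⟨h₃, by linarith⟩
  · exact of_inCone hu₁ hu₂ hu₃ h₁₂ h₂₃ ⟨h₁, by linarith⟩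
  · exact of_inCone hu₁ hu₂ hu₃ h₁₂ h₂₃ ⟨h₁, by linarith⟩
  · exact of_inCone hu₂ hu₃ hu₁ h₂₃ h₃₁ ⟨h₂, by linarith⟩
  · nlinarith [mul_pos h₁₂ h₃, mul_pos h₃₁ h₂, mul_pos h₁ h₂₃]

lemma hasSeparatingCone {u₁ u₂ u₃ w : Pt}
    (h₁₂ : orient a u₁ u₂ ≠ 0) (h₁₃ : orient a u₁ u₃ ≠ 0) (h₂₃ : orient a u₂ u₃ ≠ 0)
    (h₁w : orient a u₁ w ≠ 0) (h₂w : orient a u₂ w ≠ 0) (h₃w : orient a u₃ w ≠ 0) :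
    HasSeparatingCone a {u₁, u₂, u₃} w := by
  have hu₁ : u₁ ∈ ({u₁, u₂, u₃} : Set Pt) := by simp
  have hu₂ : u₂ ∈ ({u₁, u₂, u₃} : Set Pt) := by simp
  have hu₃ : u₃ ∈ ({u₁, u₂, u₃} : Set Pt) := by simp
  have := orient_swap a u₁ u₂
  have := orient_swap a u₁ u₃
  have := orient_swap a u₂ u₃
  -- In each sign pattern, either one `uᵢ` lies in the cone spanned by the other two, or the
  -- three surround `a`.
  rcases h₁₂.lt_or_gt with s₁₂ | s₁₂ <;> rcases h₁₃.lt_or_gt with s₁₃ | s₁₃ <;>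
    rcases h₂₃.lt_or_gt with s₂₃ | s₂₃
  · exact hasSeparatingCone_of_inCone hu₃ hu₁ hu₂ (by linarith) (by linarith) (by linarith)
      h₃w h₁w h₂w
  · exact hasSeparatingCone_of_inCone hu₂ hu₁ hu₃ (by linarith) s₂₃ (by linarith) h₂w h₁w h₃w
  · exact hasSeparatingCone_of_surrounding hu₁ hu₃ hu₂ s₁₃ (by linarith) (by linarith)
      h₁w h₃w h₂w
  · exact hasSeparatingCone_of_inCone hu₂ hu₃ hu₁ s₂₃ (by linarith) s₁₃ h₂w h₃w h₁w
  · exact hasSeparatingCone_of_inCone hu₃ hu₂ hu₁ (by linarith) (by linarith) s₁₂ h₃w h₂w h₁w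
  · exact hasSeparatingCone_of_surrounding hu₁ hu₂ hu₃ s₁₂ s₂₃ (by linarith) h₁w h₂w h₃w
  · exact hasSeparatingCone_of_inCone hu₁ hu₂ hu₃ s₁₂ s₁₃ (by linarith) h₁w h₂w h₃w
  · exact hasSeparatingCone_of_inCone hu₁ hu₃ hu₂ s₁₃ s₁₂ s₂₃ h₁w h₃w h₂w

end Cones

namespace PlaneGraph

variable {P : Finset Pt} (G : PlaneGraph P)

lemma mem_right {p q : Pt} (h : G.Adj p q) : q ∈ P := G.mem_left (G.symm h)

-- The point is `a`, or lies on the edge `au`, or has `u` on its segment from `a`, which puts `u`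
-- in the convex hull of the other points.
theorem lineMap_notMem_openSegment (hgp : GenPos P) {a u w₁ w₂ : Pt} (hu : u ∈ hullVx P)
    (hau : G.Adj a u) (hw : G.Adj w₁ w₂) (h₁a : w₁ ≠ a) (h₁u : w₁ ≠ u) (h₂a : w₂ ≠ a)
    (h₂u : w₂ ≠ u) {s : ℝ} (hs : 0 ≤ s) : AffineMap.lineMap a u s ∉ openSegment ℝ w₁ w₂ := by
  intro hz
  rcases hs.eq_or_lt with rfl | hs
  · rw [AffineMap.lineMap_apply_zero] at hz
    exact hgp.notMem_openSegment (G.mem_left hau) (G.mem_left hw) (G.mem_right hw)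
      h₁a.symm h₂a.symm (G.ne hw) hz
  rcases lt_or_ge s 1 with hs₁ | hs₁
  · have hzau : AffineMap.lineMap a u s ∈ openSegment ℝ a u := by
      rw [openSegment_eq_image_lineMap]
      exact ⟨s, ⟨hs, hs₁⟩, rfl⟩
    have hw₁ : w₁ ∈ ({a, u} : Set Pt) := G.noncross hw hau ⟨_, hz, hzau⟩ ▸ by simp
    rcases hw₁ with h | h
    exacts [h₁a h, h₁u h]
  · apply (Finset.mem_filter.1 hu).2
    have hC := convex_convexHull ℝ ((P.erase u : Finset Pt) : Set Pt)
    have mem_C : ∀ v ∈ P, v ≠ u → v ∈ convexHull ℝ ((P.erase u : Finset Pt) : Set Pt) :=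
      fun v hv hvu => subset_convexHull ℝ _ (by simp [hv, hvu])
    have hz' := hC.openSegment_subset (mem_C _ (G.mem_left hw) h₁u)
      (mem_C _ (G.mem_right hw) h₂u) hz
    have hu_mem : u ∈ segment ℝ a (AffineMap.lineMap a u s) := by
      rw [segment_eq_image_lineMap]
      refine ⟨s⁻¹, ⟨inv_nonneg.2 hs.le, inv_le_one_of_one_le₀ hs₁⟩, ?_⟩
      rw [AffineMap.lineMap_lineMap_right, inv_mul_cancel₀ hs.ne', AffineMap.lineMap_apply_one]
    exact hC.segment_subset (mem_C _ (G.mem_left hau) (G.ne hau)) hz' hu_mem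

theorem not_adj_of_inCone_of_outCone (hgp : GenPos P) {a p q w₁ w₂ : Pt}
    (hp : p ∈ hullVx P) (hq : q ∈ hullVx P) (hap : G.Adj a p) (haq : G.Adj a q)
    (hpq : 0 < orient a p q) (h₁ : InCone a p q w₁) (h₂ : OutCone a p q w₂) :
    ¬G.Adj w₁ w₂ := by
  intro hw
  obtain ⟨h₁a, h₁p, h₁q⟩ := h₁.ne
  obtain ⟨h₂a, h₂p, h₂q⟩ := h₂.ne hpq
  let z : ℝ → Pt := AffineMap.lineMap w₁ w₂
  -- The segment `w₁w₂` leaves the cone through one of its two bounding rays.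
  obtain ⟨t, ht, hzt⟩ : ∃ t ∈ Set.Ioo (0 : ℝ) 1, min (orient a p (z t)) (orient a (z t) q) = 0 := by
    have hcont : ContinuousOn (fun t => min (orient a p (z t)) (orient a (z t) q)) (Set.Icc 0 1) :=
      ((continuous_const.orient a AffineMap.lineMap_continuous).min
        (AffineMap.lineMap_continuous.orient a continuous_const)).continuousOn
    apply intermediate_value_Ioo' zero_le_one hcont
    simp only [z, AffineMap.lineMap_apply_zero, AffineMap.lineMap_apply_one, Set.mem_Ioo,
      min_lt_iff, lt_min_iff]
    exact ⟨h₂, h₁⟩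
  have hz : z t ∈ openSegment ℝ w₁ w₂ := by
    rw [openSegment_eq_image_lineMap]
    exact ⟨t, ht, rfl⟩
  rcases min_eq_iff.1 hzt with ⟨hpz, hle⟩ | ⟨hzq, hle⟩
  · obtain ⟨s, hs⟩ := exists_lineMap_eq_of_orient_eq_zero (G.ne hap).symm hpz
    have : 0 ≤ s * orient a p q := by rw [← orient_lineMap_left, hs]; linarith
    exact G.lineMap_notMem_openSegment hgp hp hap hw h₁a h₁p h₂a h₂p
      (nonneg_of_mul_nonneg_left this hpq) (hs ▸ hz)
  · obtain ⟨s, hs⟩ := exists_lineMap_eq_of_orient_eq_zero (G.ne haq).symm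
      (by rw [orient_swap, hzq, neg_zero])
    have : 0 ≤ s * orient a p q := by rw [← orient_lineMap_right, hs]; linarith
    exact G.lineMap_notMem_openSegment hgp hq haq hw h₁a h₁q h₂a h₂q
      (nonneg_of_mul_nonneg_left this hpq) (hs ▸ hz)

theorem not_kConnected_of_inCone_of_outCone (hgp : GenPos P) {a p q x y : Pt}
    (hp : p ∈ hullVx P) (hq : q ∈ hullVx P) (hap : G.Adj a p) (haq : G.Adj a q)
    (hpq : 0 < orient a p q) (hx : x ∈ P) (hy : y ∈ P) (hxin : InCone a p q x)
    (hyout : OutCone a p q y) : ¬KConnected G.graph 4 := by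
  rintro ⟨-, hconn⟩
  have ha := G.mem_left hap
  let S : Finset {v // v ∈ P} := {⟨a, ha⟩, ⟨p, G.mem_right hap⟩, ⟨q, G.mem_right haq⟩}
  have mem_compl_S {v : Pt} (hv : v ∈ P) :
      (⟨v, hv⟩ : {v // v ∈ P}) ∈ (S : Set {v // v ∈ P})ᶜ ↔ v ≠ a ∧ v ≠ p ∧ v ≠ q := by
    simp [S]
  obtain ⟨walk⟩ := (hconn S (Finset.card_le_three.trans_lt (by norm_num))).preconnected
    ⟨_, (mem_compl_S hx).2 hxin.ne⟩ ⟨_, (mem_compl_S hy).2 (hyout.ne hpq)⟩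
  obtain ⟨d, -, hd₁, hd₂⟩ := walk.exists_boundary_dart {v | InCone a p q v.1.1} hxin
    fun h => by rcases hyout with h' | h' <;> linarith [h.1, h.2]
  have hv := d.toProd.2.1.2
  obtain ⟨hva, hvp, hvq⟩ := (mem_compl_S hv).1 d.toProd.2.2
  have hout : OutCone a p q d.toProd.2.1.1 := outCone_of_not_inCone
    (hgp.orient_ne_zero ha (G.mem_right hap) hv (G.ne hap) hva.symm hvp.symm)
    (hgp.orient_ne_zero ha hv (G.mem_right haq) hva.symm (G.ne haq) hvq) hd₂
  exact G.not_adj_of_inCone_of_outCone hgp hp hq hap haq hpq hd₁ hout d.adj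

theorem not_kConnected_of_adj_three_hullVx (hgp : GenPos P) {a v₁ v₂ v₃ : Pt}
    (h₁ : v₁ ∈ hullVx P) (h₂ : v₂ ∈ hullVx P) (h₃ : v₃ ∈ hullVx P)
    (ha₁ : G.Adj a v₁) (ha₂ : G.Adj a v₂) (ha₃ : G.Adj a v₃)
    (h₁₂ : v₁ ≠ v₂) (h₁₃ : v₁ ≠ v₃) (h₂₃ : v₂ ≠ v₃) : ¬KConnected G.graph 4 := by
  intro hconn
  have hcard : ({a, v₁, v₂, v₃} : Finset Pt).card < P.card := by
    have := hconn.1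
    rw [Fintype.card_coe] at this
    exact Finset.card_le_four.trans_lt this
  obtain ⟨w, hw, hwU⟩ := Finset.exists_mem_notMem_of_card_lt_card hcard
  simp only [Finset.mem_insert, Finset.mem_singleton, not_or] at hwU
  obtain ⟨hwa, hw₁, hw₂, hw₃⟩ := hwU
  have ha := G.mem_left ha₁
  have hv₁ := G.mem_right ha₁
  have hv₂ := G.mem_right ha₂
  have hv₃ := G.mem_right ha₃
  obtain ⟨p, hp, q, hq, hpq, x, hx, y, hy, hxin, hyout⟩ := hasSeparatingCone
    (hgp.orient_ne_zero ha hv₁ hv₂ (G.ne ha₁) (G.ne ha₂) h₁₂)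
    (hgp.orient_ne_zero ha hv₁ hv₃ (G.ne ha₁) (G.ne ha₃) h₁₃)
    (hgp.orient_ne_zero ha hv₂ hv₃ (G.ne ha₂) (G.ne ha₃) h₂₃)
    (hgp.orient_ne_zero ha hv₁ hw (G.ne ha₁) (Ne.symm hwa) (Ne.symm hw₁))
    (hgp.orient_ne_zero ha hv₂ hw (G.ne ha₂) (Ne.symm hwa) (Ne.symm hw₂))
    (hgp.orient_ne_zero ha hv₃ hw (G.ne ha₃) (Ne.symm hwa) (Ne.symm hw₃))
  have hull_nbr : ∀ u ∈ ({v₁, v₂, v₃} : Set Pt), u ∈ hullVx P ∧ G.Adj a u := by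
    rintro u (rfl | rfl | rfl)
    exacts [⟨h₁, ha₁⟩, ⟨h₂, ha₂⟩, ⟨h₃, ha₃⟩]
  have mem_P : ∀ u ∈ insert w ({v₁, v₂, v₃} : Set Pt), u ∈ P := by
    rintro u (rfl | rfl | rfl | rfl) <;> assumption
  exact G.not_kConnected_of_inCone_of_outCone hgp (hull_nbr p hp).1 (hull_nbr q hq).1
    (hull_nbr p hp).2 (hull_nbr q hq).2 hpq (mem_P x hx) (mem_P y hy) hxin hyout hconn

end PlaneGraph

/-- in a 4-connected triangulation, no two inward triangles share
their inward vertex: every interior point is the inward vertex of at most one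
inward triangle. -/
theorem inward_vertex_unique (P : Finset Pt) (hgp : GenPos P)
    (T : Triangulation P) (hconn : KConnected T.toPlaneGraph.graph 4)
    (a b c b' c' : Pt)
    (h : InwardTri T.toPlaneGraph b c a) (h' : InwardTri T.toPlaneGraph b' c' a) :
    ({b, c} : Set Pt) = {b', c'} := by
  obtain ⟨⟨-, hca, hba⟩, ⟨hb, hc, hbc, -⟩, -⟩ := h
  obtain ⟨⟨-, hca', hba'⟩, ⟨hb', hc', hbc', -⟩, -⟩ := h'
  by_contra hne
  obtain ⟨v, hv, hvb, hvc, hav⟩ : ∃ v ∈ hullVx P, v ≠ b ∧ v ≠ c ∧ T.Adj a v := by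
    by_contra! hnone
    have hb'bc : b' = b ∨ b' = c := by
      by_contra! hb'bc
      exact hnone b' hb' hb'bc.1 hb'bc.2 (T.symm hba')
    have hc'bc : c' = b ∨ c' = c := by
      by_contra! hc'bc
      exact hnone c' hc' hc'bc.1 hc'bc.2 (T.symm hca')
    apply hne
    rcases hb'bc with rfl | rfl <;> rcases hc'bc with rfl | rfl
    exacts [absurd rfl hbc', rfl, Set.pair_comm _ _, absurd rfl hbc']
  exact T.not_kConnected_of_adj_three_hullVx hgp hb hc hv (T.symm hba) (T.symm hca) hav
    hbc hvb.symm hvc.symm hconn
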